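/- arXiv:2403.03625 — 3 statements merged into one kernel-verified Lean document; each statement's English description precedes it below -/
import Mathlib

section
/- For the set A = {0, d, 2d, …, (k−1)d} with d a positive integer and 4 ≤ h ≤ k−1, the restricted h-fold signed sumset satisfies h^∧_±(d·[0,k−1]) = d·[−(hk − h(h+1)/2), hk − h(h+1)/2]. -/
open Finset

/-- The restricted `h`-fold signed sumset of a finite set `A` of integers:
all sums `∑ λᵢ aᵢ` with `λᵢ ∈ {-1,0,1}` and `∑ |λᵢ| = h`. -/
def signedSumset (h : ℕ) (A : Finset ℤ) : Set ℤ :=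
  {s | ∃ f : ℤ → ℤ, (∀ a, f a = -1 ∨ f a = 0 ∨ f a = 1) ∧ (∀ a ∉ A, f a = 0) ∧
    (∑ a ∈ A, |f a|) = (h : ℤ) ∧ s = ∑ a ∈ A, f a * a}


private lemma gauss (h : ℕ) : (∑ i ∈ range h, (i:ℤ)) * 2 = h * (h - 1) := by
  induction h with
  | zero => simp
  | succ n ih =>
    rw [sum_range_succ]
    push_cast
    push_cast at ih
    ring_nf
    ring_nf at ih
    linarith

private lemma sum_distinct : ∀ (k h : ℕ) (n : ℤ), h ≤ k →
    (h:ℤ) * (h - 1) ≤ 2 * n → 2 * n ≤ 2 * h * k - h * (h + 1) →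
    ∃ B : Finset ℕ, B ⊆ range k ∧ B.card = h ∧ ∑ i ∈ B, (i:ℤ) = n := by
  intro k
  induction k with
  | zero =>
    intro h n hk h1 h2
    interval_cases h
    refine ⟨∅, by simp, by simp, ?_⟩
    push_cast at h1 h2
    simp only [sum_empty]
    linarith
  | succ k ih =>
    intro h n hhk h1 h2
    rcases Nat.eq_zero_or_pos h with rfl | hpos
    · refine ⟨∅, by simp, by simp, ?_⟩
      push_cast at h1 h2
      simp only [sum_empty]
      linarith
    · have hcast : ((h - 1 : ℕ) : ℤ) = (h:ℤ) - 1 := by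
        push_cast [Nat.cast_sub hpos]; ring
      by_cases hc : ((h:ℤ)-1)*((h:ℤ)-2) ≤ 2*(n - k)
      · obtain ⟨B, hB, hcard, hsum⟩ := ih (h-1) (n - (k:ℤ)) (by omega)
          (by rw [hcast]; linarith)
          (by rw [hcast]; push_cast at h2 ⊢; nlinarith [h2])
        refine ⟨insert k B, ?_, ?_, ?_⟩
        · exact Finset.insert_subset_iff.2
            ⟨mem_range.2 (Nat.lt_succ_self k), hB.trans (range_subset_range.2 (Nat.le_succ k))⟩
        · have hk' : k ∉ B := fun hkk => absurd (mem_range.1 (hB hkk)) (lt_irrefl k)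
          rw [Finset.card_insert_of_notMem hk', hcard]; omega
        · have hk' : k ∉ B := fun hkk => absurd (mem_range.1 (hB hkk)) (lt_irrefl k)
          rw [Finset.sum_insert hk', hsum]; ring
      · push_neg at hc
        have hhk' : h ≤ k := by
          rcases Nat.lt_or_ge h (k+1) with hlt | hge
          · omega
          · exfalso
            have : h = k + 1 := by omega
            subst this
            push_cast at hc h1
            nlinarith
        obtain ⟨t, ht⟩ := Int.even_mul_succ_self (h:ℤ)
        have hb : 2*n ≤ 2*(h:ℤ)*k - h*(h+1) := by
          have hk2 : (h:ℤ) ≤ (k:ℤ) := by exact_mod_cast hhk'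
          have h1' : (1:ℤ) ≤ h := by exact_mod_cast hpos
          have key : (0:ℤ) ≤ ((h:ℤ)-1)*((k:ℤ)-h) := by nlinarith
          have h3 : 2*n < 2*((h:ℤ)*(k:ℤ) - t) + 2 := by nlinarith
          have h4 : n < (h:ℤ)*(k:ℤ) - t + 1 := by linarith
          have h5 : n ≤ (h:ℤ)*(k:ℤ) - t := by omega
          nlinarith
        obtain ⟨B, hB, hcard, hsum⟩ := ih h n hhk' h1 (by linarith)
        exact ⟨B, hB.trans (range_subset_range.2 (Nat.le_succ k)), hcard, hsum⟩

private lemma subset_sum : ∀ (h : ℕ) (m : ℤ), 0 ≤ m → 2 * m ≤ h * (h - 1) →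
    ∃ N : Finset ℕ, N ⊆ range h ∧ ∑ i ∈ N, (i:ℤ) = m := by
  intro h
  induction h with
  | zero =>
    intro m h0 h2
    refine ⟨∅, by simp, ?_⟩
    push_cast at h2
    simp only [sum_empty]
    linarith
  | succ h ih =>
    intro m h0 h2
    by_cases hc : 2 * m ≤ (h:ℤ) * ((h:ℤ) - 1)
    · obtain ⟨N, hN, hsum⟩ := ih m h0 hc
      exact ⟨N, hN.trans (range_subset_range.2 (Nat.le_succ h)), hsum⟩
    · push_neg at hc
      have hfact : (0:ℤ) ≤ ((h:ℤ)-1)*((h:ℤ)-2) := by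
        rcases Nat.lt_or_ge h 2 with h2'|h2'
        · interval_cases h <;> norm_num
        · have : (2:ℤ) ≤ (h:ℤ) := by exact_mod_cast h2'
          nlinarith
      have hm : (h:ℤ) ≤ m := by nlinarith
      obtain ⟨N, hN, hsum⟩ := ih (m - h) (by linarith)
        (by push_cast at h2 ⊢; nlinarith)
      have hh : h ∉ N := fun hx => absurd (mem_range.1 (hN hx)) (lt_irrefl h)
      refine ⟨insert h N, ?_, ?_⟩
      · exact Finset.insert_subset_iff.2
          ⟨mem_range.2 (Nat.lt_succ_self h), hN.trans (range_subset_range.2 (Nat.le_succ h))⟩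
      · rw [Finset.sum_insert hh, hsum]; ring

private lemma subset_sum' (h : ℕ) (hh : 4 ≤ h) (m : ℤ) (h0 : 0 ≤ m)
    (h2 : 2 * m ≤ h * (h - 1) + 2) :
    ∃ N : Finset ℕ, N ⊆ insert h (range (h - 1)) ∧ ∑ i ∈ N, (i:ℤ) = m := by
  have hcast : ((h - 1 : ℕ) : ℤ) = (h:ℤ) - 1 := by
    have : 1 ≤ h := by omega
    push_cast [Nat.cast_sub this]; ring
  by_cases hc : 2 * m ≤ ((h:ℤ)-1) * ((h:ℤ) - 2)
  · obtain ⟨N, hN, hsum⟩ := subset_sum (h-1) m h0 (by rw [hcast]; linarith)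
    exact ⟨N, hN.trans (Finset.subset_insert _ _), hsum⟩
  · push_neg at hc
    have h4 : (4:ℤ) ≤ (h:ℤ) := by exact_mod_cast hh
    have hm : (h:ℤ) ≤ m := by nlinarith
    obtain ⟨N, hN, hsum⟩ := subset_sum (h-1) (m - h) (by linarith)
      (by rw [hcast]; nlinarith)
    have hhN : h ∉ N := fun hx => absurd (mem_range.1 (hN hx)) (by omega)
    refine ⟨insert h N, Finset.insert_subset_iff.2
      ⟨Finset.mem_insert_self _ _, hN.trans (Finset.subset_insert _ _)⟩, ?_⟩
    rw [Finset.sum_insert hhN, hsum]; ring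

private lemma repr_pos (h k : ℕ) (hh : 4 ≤ h) (hk : h + 1 ≤ k) (n : ℤ)
    (h0 : 0 ≤ n) (h2 : 2 * n ≤ 2 * h * k - h * (h + 1)) :
    ∃ P N : Finset ℕ, Disjoint P N ∧ P ⊆ range k ∧ N ⊆ range k ∧
      P.card + N.card = h ∧ (∑ i ∈ P, (i:ℤ)) - (∑ i ∈ N, (i:ℤ)) = n := by
  by_cases hc : (h:ℤ) * ((h:ℤ) - 1) ≤ 2 * n
  · obtain ⟨B, hB, hcard, hsum⟩ := sum_distinct k h n (by omega) hc h2
    exact ⟨B, ∅, Finset.disjoint_empty_right _, hB, by simp, by simp [hcard], by simp [hsum]⟩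
  · push_neg at hc
    set S : ℤ := ∑ i ∈ range h, (i:ℤ) with hS
    have hgauss : S * 2 = (h:ℤ) * ((h:ℤ) - 1) := gauss h
    have hSnn : 0 ≤ S := Finset.sum_nonneg fun i _ => Int.natCast_nonneg i
    have hnS : n < S := by linarith
    rcases Int.even_or_odd (S - n) with ⟨m, hm⟩ | ⟨m, hm⟩
    · -- S - n = m + m
      have hm0 : 0 ≤ m := by linarith
      obtain ⟨N, hN, hsum⟩ := subset_sum h m hm0 (by linarith)
      refine ⟨range h \ N, N, Finset.sdiff_disjoint, ?_, ?_, ?_, ?_⟩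
      · exact (Finset.sdiff_subset).trans (range_subset_range.2 (by omega))
      · exact hN.trans (range_subset_range.2 (by omega))
      · have hcs := Finset.card_sdiff_of_subset hN
        have h1 := Finset.card_le_card hN
        simp only [card_range] at hcs h1
        omega
      · have hsd : (∑ i ∈ range h \ N, (i:ℤ)) + ∑ i ∈ N, (i:ℤ) = ∑ i ∈ range h, (i:ℤ) :=
          Finset.sum_sdiff hN
        rw [← hS] at hsd
        rw [show (∑ i ∈ range h \ N, (i:ℤ)) = S - m by rw [← hsd, hsum]; ring, hsum]
        linarith
    · -- S - n = 2*m + 1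
      have hcast : ((h - 1 : ℕ) : ℤ) = (h:ℤ) - 1 := by
        have : 1 ≤ h := by omega
        push_cast [Nat.cast_sub this]; ring
      have hhB : h ∉ range (h-1) := fun hx => absurd (mem_range.1 hx) (by omega)
      have hSB : ∑ i ∈ insert h (range (h - 1)), (i:ℤ) = S + 1 := by
        rw [Finset.sum_insert hhB]
        have hsplit : S = (∑ i ∈ range (h-1), (i:ℤ)) + ((h-1 : ℕ):ℤ) := by
          rw [hS, show h = (h-1) + 1 by omega, sum_range_succ]
          norm_num [show h - 1 + 1 = h by omega]
        rw [hcast] at hsplit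
        linarith
      have hm0 : 0 ≤ m + 1 := by linarith
      obtain ⟨N, hN, hsum⟩ := subset_sum' h hh (m+1) hm0 (by linarith)
      have hBk : insert h (range (h-1)) ⊆ range k :=
        Finset.insert_subset_iff.2 ⟨mem_range.2 (by omega), range_subset_range.2 (by omega)⟩
      have hcardB : (insert h (range (h-1))).card = h := by
        rw [Finset.card_insert_of_notMem hhB, card_range]; omega
      refine ⟨insert h (range (h-1)) \ N, N, Finset.sdiff_disjoint,
        (Finset.sdiff_subset).trans hBk, hN.trans hBk, ?_, ?_⟩
      · have hcs := Finset.card_sdiff_of_subset hN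
        have h1 := Finset.card_le_card hN
        rw [hcardB] at hcs h1
        omega
      · have hsd : (∑ i ∈ insert h (range (h-1)) \ N, (i:ℤ)) + ∑ i ∈ N, (i:ℤ)
            = ∑ i ∈ insert h (range (h-1)), (i:ℤ) := Finset.sum_sdiff hN
        rw [hSB] at hsd
        rw [show (∑ i ∈ insert h (range (h-1)) \ N, (i:ℤ)) = S + 1 - (m+1) by
          rw [← hsd, hsum]; ring, hsum]
        linarith

private lemma reprZ (h k : ℕ) (hh : 4 ≤ h) (hk : h + 1 ≤ k) (n : ℤ)
    (h2 : 2 * |n| ≤ 2 * h * k - h * (h + 1)) :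
    ∃ P N : Finset ℕ, Disjoint P N ∧ P ⊆ range k ∧ N ⊆ range k ∧
      P.card + N.card = h ∧ (∑ i ∈ P, (i:ℤ)) - (∑ i ∈ N, (i:ℤ)) = n := by
  rcases le_or_gt 0 n with h0 | h0
  · exact repr_pos h k hh hk n h0 (by rw [abs_of_nonneg h0] at h2; linarith)
  · obtain ⟨P, N, hdis, hP, hN, hcard, hsum⟩ := repr_pos h k hh hk (-n) (by linarith)
      (by rw [abs_of_neg h0] at h2; linarith)
    exact ⟨N, P, hdis.symm, hN, hP, by omega, by linarith⟩

theorem stmt8 (h k : ℕ) (hh : 4 ≤ h) (hhk : h ≤ k - 1) (hk : 5 ≤ k)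
    (d : ℤ) (hd : 0 < d)
    (A : Finset ℤ) (hA : A = (Finset.range k).image (fun i : ℕ => (i : ℤ) * d)) :
    signedSumset h A =
      {x : ℤ | ∃ n : ℤ, x = d * n ∧
        -((h * k - h * (h + 1) / 2 : ℕ) : ℤ) ≤ n ∧
        n ≤ ((h * k - h * (h + 1) / 2 : ℕ) : ℤ)} := by
  have hd' : d ≠ 0 := hd.ne'
  have hkh : h + 1 ≤ k := by omega
  have hinj : ∀ x ∈ range k, ∀ y ∈ range k, (x:ℤ) * d = (y:ℤ) * d → x = y := by
    intro x _ y _ hxy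
    have : (x:ℤ) = y := mul_right_cancel₀ hd' hxy
    exact_mod_cast this
  -- arithmetic about M
  obtain ⟨t, ht⟩ := Nat.even_mul_succ_self h
  have htk : t ≤ h * k := by
    have : h * (h+1) ≤ h * k := Nat.mul_le_mul (le_refl h) hkh
    omega
  have hdiv : h * (h+1) / 2 = t := by rw [ht]; omega
  have hMz : ((h * k - h * (h + 1) / 2 : ℕ) : ℤ) * 2 = 2*(h:ℤ)*k - h*(h+1) := by
    rw [hdiv]
    have htz : ((h:ℤ)) * (h+1) = (t:ℤ) + t := by exact_mod_cast congrArg (Nat.cast : ℕ → ℤ) ht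
    push_cast [Nat.cast_sub htk]
    linarith
  have hgauss := gauss h
  ext x
  simp only [signedSumset, Set.mem_setOf_eq]
  constructor
  · rintro ⟨f, hf1, hf0, hfs, hfv⟩
    rw [hA, Finset.sum_image hinj] at hfs hfv
    refine ⟨∑ i ∈ range k, f ((i:ℤ)*d) * i, ?_, ?_, ?_⟩
    · rw [hfv, Finset.mul_sum]
      exact Finset.sum_congr rfl fun i _ => by ring
    all_goals {
      have habs : |∑ i ∈ range k, f ((i:ℤ)*d) * i| ≤ ∑ i ∈ range k, |f ((i:ℤ)*d)| * i := by
        refine (Finset.abs_sum_le_sum_abs _ _).trans_eq ?_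
        exact Finset.sum_congr rfl fun i _ => by
          rw [abs_mul, Int.abs_natCast]
      have hbound : ∑ i ∈ range k, |f ((i:ℤ)*d)| * i ≤ ((h * k - h * (h + 1) / 2 : ℕ) : ℤ) := by
        have hsplit : ∑ i ∈ range k, |f ((i:ℤ)*d)| * (i:ℤ)
            = (∑ i ∈ range k, |f ((i:ℤ)*d)| * ((i:ℤ) - ((k:ℤ) - h)))
              + ((k:ℤ) - h) * ∑ i ∈ range k, |f ((i:ℤ)*d)| := by
          rw [Finset.mul_sum, ← Finset.sum_add_distrib]
          exact Finset.sum_congr rfl fun i _ => by ring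
        have hico : (∑ i ∈ Ico 0 (k-h), |f ((i:ℤ)*d)| * ((i:ℤ) - ((k:ℤ) - h)))
            + (∑ i ∈ Ico (k-h) k, |f ((i:ℤ)*d)| * ((i:ℤ) - ((k:ℤ) - h)))
            = ∑ i ∈ Ico 0 k, |f ((i:ℤ)*d)| * ((i:ℤ) - ((k:ℤ) - h)) :=
          Finset.sum_Ico_consecutive _ (Nat.zero_le _) (by omega)
        have hpart1 : (∑ i ∈ Ico 0 (k-h), |f ((i:ℤ)*d)| * ((i:ℤ) - ((k:ℤ) - h))) ≤ 0 := by
          refine Finset.sum_nonpos fun i hi => ?_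
          have hi' : i < k - h := (Finset.mem_Ico.1 hi).2
          have : (i:ℤ) ≤ (k:ℤ) - h - 1 := by
            have : (i:ℤ) < ((k - h : ℕ):ℤ) := by exact_mod_cast hi'
            rw [Nat.cast_sub (by omega)] at this
            omega
          exact mul_nonpos_of_nonneg_of_nonpos (abs_nonneg _) (by linarith)
        have hpart2 : (∑ i ∈ Ico (k-h) k, |f ((i:ℤ)*d)| * ((i:ℤ) - ((k:ℤ) - h)))
            ≤ ∑ i ∈ Ico (k-h) k, ((i:ℤ) - ((k:ℤ) - h)) := by
          refine Finset.sum_le_sum fun i hi => ?_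
          have hi' : k - h ≤ i := (Finset.mem_Ico.1 hi).1
          have hx : (0:ℤ) ≤ (i:ℤ) - ((k:ℤ) - h) := by
            have : ((k - h : ℕ):ℤ) ≤ (i:ℤ) := by exact_mod_cast hi'
            rw [Nat.cast_sub (by omega)] at this
            linarith
          have hf1' : |f ((i:ℤ)*d)| ≤ 1 := by
            rcases hf1 ((i:ℤ)*d) with h'|h'|h' <;> rw [h'] <;> norm_num
          calc |f ((i:ℤ)*d)| * ((i:ℤ) - ((k:ℤ) - h))
              ≤ 1 * ((i:ℤ) - ((k:ℤ) - h)) := mul_le_mul_of_nonneg_right hf1' hx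
            _ = (i:ℤ) - ((k:ℤ) - h) := one_mul _
        have hpart2' : (∑ i ∈ Ico (k-h) k, ((i:ℤ) - ((k:ℤ) - h))) = ∑ i ∈ range h, (i:ℤ) := by
          rw [Finset.sum_Ico_eq_sum_range]
          rw [show k - (k - h) = h by omega]
          refine Finset.sum_congr rfl fun i _ => ?_
          push_cast [Nat.cast_sub (show h ≤ k by omega)]
          ring
        rw [← Finset.range_eq_Ico] at hico hpart1
        rw [← Finset.range_eq_Ico] at hico
        rw [hsplit, hfs, ← hico]
        linarith [hpart1, hpart2, hpart2', hgauss, hMz]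
      rw [abs_le] at habs
      linarith [habs.1, habs.2, hbound]
    }
  · rintro ⟨n, hxn, hn1, hn2⟩
    have h2 : 2 * |n| ≤ 2 * (h:ℤ) * k - h * (h+1) := by
      rcases abs_cases n with ⟨he, _⟩ | ⟨he, _⟩ <;> rw [he] <;> linarith [hMz]
    obtain ⟨P, N, hdis, hP, hN, hcard, hsum⟩ := reprZ h k hh hkh n h2
    classical
    set f : ℤ → ℤ := fun y =>
      if ∃ i ∈ P, ((i:ℕ):ℤ) * d = y then 1
      else if ∃ i ∈ N, ((i:ℕ):ℤ) * d = y then -1 else 0 with hfdef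
    have hfP : ∀ i ∈ P, f ((i:ℤ) * d) = 1 := by
      intro i hi
      simp only [hfdef]
      rw [if_pos ⟨i, hi, rfl⟩]
    have hfN : ∀ i ∈ N, f ((i:ℤ) * d) = -1 := by
      intro i hi
      simp only [hfdef]
      rw [if_neg, if_pos ⟨i, hi, rfl⟩]
      rintro ⟨j, hj, hjd⟩
      have : (j:ℤ) = i := mul_right_cancel₀ hd' hjd
      have : j = i := by exact_mod_cast this
      subst this
      exact (Finset.disjoint_left.1 hdis hj) hi
    have hfO : ∀ i : ℕ, i ∉ P → i ∉ N → f ((i:ℤ) * d) = 0 := by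
      intro i hiP hiN
      simp only [hfdef]
      rw [if_neg, if_neg]
      · rintro ⟨j, hj, hjd⟩
        have : (j:ℤ) = i := mul_right_cancel₀ hd' hjd
        have : j = i := by exact_mod_cast this
        subst this; exact hiN hj
      · rintro ⟨j, hj, hjd⟩
        have : (j:ℤ) = i := mul_right_cancel₀ hd' hjd
        have : j = i := by exact_mod_cast this
        subst this; exact hiP hj
    refine ⟨f, ?_, ?_, ?_, ?_⟩
    · intro a
      simp only [hfdef]
      split_ifs <;> simp
    · intro a ha
      simp only [hfdef]
      rw [if_neg, if_neg]
      · rintro ⟨j, hj, rfl⟩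
        exact ha (hA ▸ Finset.mem_image.2 ⟨j, hN hj, rfl⟩)
      · rintro ⟨j, hj, rfl⟩
        exact ha (hA ▸ Finset.mem_image.2 ⟨j, hP hj, rfl⟩)
    · rw [hA, Finset.sum_image hinj]
      have hchar : ∀ i ∈ range k, |f ((i:ℤ) * d)| = if i ∈ P ∪ N then (1:ℤ) else 0 := by
        intro i _
        by_cases hiP : i ∈ P
        · rw [hfP i hiP, if_pos (Finset.mem_union_left _ hiP)]; norm_num
        · by_cases hiN : i ∈ N
          · rw [hfN i hiN, if_pos (Finset.mem_union_right _ hiN)]; norm_num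
          · rw [hfO i hiP hiN, if_neg (by simp [hiP, hiN])]; norm_num
      rw [Finset.sum_congr rfl hchar, Finset.sum_ite_mem,
        Finset.inter_eq_right.2 (Finset.union_subset hP hN), Finset.sum_const,
        Finset.card_union_of_disjoint hdis]
      push_cast [hcard]
      ring
    · rw [hA, Finset.sum_image hinj]
      have hchar : ∀ i ∈ range k, f ((i:ℤ) * d) * ((i:ℤ) * d)
          = (if i ∈ P then ((i:ℤ) * d) else 0) + (if i ∈ N then -((i:ℤ) * d) else 0) := by
        intro i _
        by_cases hiP : i ∈ P
        · have hiN : i ∉ N := Finset.disjoint_left.1 hdis hiP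
          rw [hfP i hiP, if_pos hiP, if_neg hiN]; ring
        · by_cases hiN : i ∈ N
          · rw [hfN i hiN, if_neg hiP, if_pos hiN]; ring
          · rw [hfO i hiP hiN, if_neg hiP, if_neg hiN]; ring
      rw [Finset.sum_congr rfl hchar, Finset.sum_add_distrib, Finset.sum_ite_mem,
        Finset.sum_ite_mem, Finset.inter_eq_right.2 hP, Finset.inter_eq_right.2 hN]
      have e1 : ∑ i ∈ P, ((i:ℤ) * d) = (∑ i ∈ P, (i:ℤ)) * d := by rw [Finset.sum_mul]
      have e2 : ∑ i ∈ N, -((i:ℤ) * d) = -((∑ i ∈ N, (i:ℤ)) * d) := by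
        rw [Finset.sum_mul, ← Finset.sum_neg_distrib]
      rw [e1, e2, hxn, ← hsum]
      ring
end

section
/- Let 4 ≤ h ≤ k−1 and let A = {a₁ < a₂ < ⋯ < a_k} be a set of k positive integers such that |h^∧_± A| = 2hk − h² + 1 and A is an arithmetic progression. Then A = a₁·{1, 3, 5, …, 2k−1}. -/
open Finset

namespace S9

def UU (k p m : ℕ) : ℤ := (k.choose 2 : ℤ) - ((k - p).choose 2 : ℤ) - (m.choose 2 : ℤ)

def LL (k p m : ℕ) : ℤ := -UU k m p

lemma choose2 (n : ℕ) : ((n.choose 2 : ℕ) : ℤ) * 2 = n * (n - 1) := by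
  induction n with
  | zero => simp
  | succ n ih =>
    rw [Nat.choose_succ_succ, Nat.choose_one_right]
    push_cast
    push_cast at ih
    linear_combination ih

lemma UU2 (k p m : ℕ) (hp : p ≤ k) :
    2 * UU k p m = 2 * k * p - p ^ 2 - p - m ^ 2 + m := by
  have h1 := choose2 k
  have h2 := choose2 (k - p)
  have h3 := choose2 m
  have hc : ((k - p : ℕ) : ℤ) = (k : ℤ) - p := by push_cast [hp]; ring
  rw [hc] at h2
  unfold UU
  linear_combination h1 - h2 - h3

lemma LL2 (k p m : ℕ) (hm : m ≤ k) :
    2 * LL k p m = -(2 * k * m) + m ^ 2 + m + p ^ 2 - p := by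
  unfold LL
  have := UU2 k m p hm
  linarith

def Achv (k p m : ℕ) (T : ℤ) : Prop :=
  ∃ P M : Finset ℕ, P ⊆ range k ∧ M ⊆ range k ∧ Disjoint P M ∧
    P.card = p ∧ M.card = m ∧ (∑ i ∈ P, (i : ℤ)) - (∑ i ∈ M, (i : ℤ)) = T

lemma Achv.swap {k p m : ℕ} {T : ℤ} (h : Achv k p m T) : Achv k m p (-T) := by
  obtain ⟨P, M, h1, h2, h3, h4, h5, h6⟩ := h
  exact ⟨M, P, h2, h1, h3.symm, h5, h4, by linarith⟩

lemma Achv.addTopP {K p m : ℕ} {T : ℤ} (h : Achv K p m T) :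
    Achv (K + 1) (p + 1) m (T + K) := by
  obtain ⟨P, M, h1, h2, h3, h4, h5, h6⟩ := h
  have hKP : K ∉ P := fun hc => by have := h1 hc; simp at this
  have hKM : K ∉ M := fun hc => by have := h2 hc; simp at this
  refine ⟨insert K P, M, ?_, h2.trans (by intro x hx; simp at hx ⊢; omega), ?_, ?_, h5, ?_⟩
  · intro x hx
    simp only [mem_insert] at hx
    rcases hx with rfl | hx
    · simp
    · have := h1 hx; simp at this ⊢; omega
  · rw [Finset.disjoint_left]
    intro x hx
    simp only [mem_insert] at hx
    rcases hx with rfl | hx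
    · exact hKM
    · exact (Finset.disjoint_left.1 h3) hx
  · rw [Finset.card_insert_of_notMem hKP, h4]
  · rw [Finset.sum_insert hKP]
    push_cast
    linarith

lemma Achv.addTopM {K p m : ℕ} {T : ℤ} (h : Achv K p m T) :
    Achv (K + 1) p (m + 1) (T - K) := by
  have h2 := (h.swap.addTopP).swap
  have e : -(-T + (K:ℤ)) = T - K := by ring
  rwa [e] at h2

lemma Achv.dropTop {K p m : ℕ} {T : ℤ} (h : Achv K p m T) : Achv (K + 1) p m T := by
  obtain ⟨P, M, h1, h2, h3, h4, h5, h6⟩ := h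
  exact ⟨P, M, h1.trans (range_subset_range.2 (by omega)), h2.trans (range_subset_range.2 (by omega)),
    h3, h4, h5, h6⟩

lemma achv_single {k x : ℕ} (hx : x < k) : Achv k 1 0 (x : ℤ) := by
  exact ⟨{x}, ∅, by simp [hx], by simp, by simp, by simp, by simp, by simp⟩

lemma achv_pair_single {k x y z : ℕ} (hx : x < k) (hy : y < k) (hz : z < k)
    (hxy : x ≠ y) (hxz : x ≠ z) (hyz : y ≠ z) : Achv k 2 1 ((x : ℤ) + y - z) := by
  refine ⟨{x, y}, {z}, ?_, by simp [hz], ?_, ?_, by simp, ?_⟩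
  · intro w hw; simp at hw; rcases hw with rfl | rfl <;> simp [hx, hy]
  · rw [Finset.disjoint_left]; intro w hw; simp at hw ⊢
    rcases hw with rfl | rfl <;> omega
  · rw [Finset.card_insert_of_notMem (by simp [hxy]), Finset.card_singleton]
  · rw [Finset.sum_pair hxy, Finset.sum_singleton]

lemma achv_one_one {k x z : ℕ} (hx : x < k) (hz : z < k) (hxz : x ≠ z) :
    Achv k 1 1 ((x : ℤ) - z) := by
  refine ⟨{x}, {z}, by simp [hx], by simp [hz], by simp [hxz, Ne.symm hxz], by simp, by simp, by simp⟩

lemma sum_range_int (n : ℕ) : (∑ i ∈ range n, (i : ℤ)) = (n.choose 2 : ℕ) := by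
  induction n with
  | zero => simp
  | succ n ih =>
    rw [Finset.sum_range_succ, ih, Nat.choose_succ_succ, Nat.choose_one_right]
    push_cast; ring

lemma achv_full {k g : ℕ} (hg : g < k) :
    Achv k (k - 1) 0 ((k.choose 2 : ℕ) - (g : ℤ)) := by
  refine ⟨(range k).erase g, ∅, Finset.erase_subset _ _, by simp, by simp, ?_, by simp, ?_⟩
  · rw [Finset.card_erase_of_mem (by simp [hg]), Finset.card_range]
  · rw [Finset.sum_erase_eq_sub (by simp [hg]), sum_range_int]
    simp

lemma arith_up (k p m : ℕ) (T : ℤ) (hp : 1 ≤ p) (h1 : p + m + 1 ≤ k)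
    (hT : T ≤ UU k p m) : T - ((k : ℤ) - 1) ≤ UU (k - 1) (p - 1) m := by
  have e1 := UU2 k p m (by omega)
  have e2 := UU2 (k - 1) (p - 1) m (by omega)
  have c1 : ((k - 1 : ℕ) : ℤ) = (k : ℤ) - 1 := by push_cast [show 1 ≤ k by omega]; ring
  have c2 : ((p - 1 : ℕ) : ℤ) = (p : ℤ) - 1 := by push_cast [hp]; ring
  rw [c1, c2] at e2
  nlinarith [e1, e2]

lemma arith_b1 (k p m : ℕ) (T : ℤ) (hp : 1 ≤ p) (h1 : p + m + 1 ≤ k)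
    (hT : UU (k - 1) p m < T) : LL (k - 1) (p - 1) m ≤ T - ((k : ℤ) - 1) := by
  have e1 := UU2 (k - 1) p m (by omega)
  have e2 := LL2 (k - 1) (p - 1) m (by omega)
  have c1 : ((k - 1 : ℕ) : ℤ) = (k : ℤ) - 1 := by push_cast [show 1 ≤ k by omega]; ring
  have c2 : ((p - 1 : ℕ) : ℤ) = (p : ℤ) - 1 := by push_cast [hp]; ring
  rw [c1] at e1 e2
  rw [c2] at e2
  nlinarith [mul_nonneg (show (0:ℤ) ≤ (p:ℤ) - 1 by omega)
      (show (0:ℤ) ≤ (k:ℤ) - 1 - p by omega),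
    mul_nonneg (show (0:ℤ) ≤ (m:ℤ) by omega)
      (show (0:ℤ) ≤ (k:ℤ) - 1 - m by omega)]

lemma arith_cov (k p m : ℕ) (T : ℤ) (hp : 1 ≤ p) (hm : 1 ≤ m) (h3 : 3 ≤ p + m)
    (heq : p + m + 1 = k) (hT : T < ((k : ℤ) - 1) + LL (k - 1) (p - 1) m) :
    T ≤ UU (k - 1) p (m - 1) - ((k : ℤ) - 1) := by
  have e1 := UU2 (k - 1) p (m - 1) (by omega)
  have e2 := LL2 (k - 1) (p - 1) m (by omega)
  have c1 : ((k - 1 : ℕ) : ℤ) = (k : ℤ) - 1 := by push_cast [show 1 ≤ k by omega]; ring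
  have c2 : ((p - 1 : ℕ) : ℤ) = (p : ℤ) - 1 := by push_cast [hp]; ring
  have c3 : ((m - 1 : ℕ) : ℤ) = (m : ℤ) - 1 := by push_cast [hm]; ring
  rw [c1, c2] at e2
  rw [c1, c3] at e1
  have hK : (k : ℤ) = (p : ℤ) + m + 1 := by omega
  nlinarith [mul_nonneg (show (0:ℤ) ≤ (p:ℤ) - 1 by omega)
      (show (0:ℤ) ≤ (m:ℤ) - 1 by omega),
    (show (3:ℤ) ≤ (p:ℤ) + m by omega)]

lemma UU_p0 (k m : ℕ) (hk : 1 ≤ k) : UU k 0 m = UU (k - 1) 0 m := by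
  have e1 := UU2 k 0 m (by omega)
  have e2 := UU2 (k - 1) 0 m (by omega)
  norm_num at e1 e2
  linarith

lemma LL_m0 (k p : ℕ) (hk : 1 ≤ k) (hpk : p ≤ k - 1) : LL k p 0 = LL (k - 1) p 0 := by
  have e1 := LL2 k p 0 (by omega)
  have e2 := LL2 (k - 1) p 0 (by omega)
  norm_num at e1 e2
  linarith




lemma ach21 (k : ℕ) (T : ℤ) (hk : 4 ≤ k) (hL : 2 - (k:ℤ) ≤ T) (hU : T ≤ 2*(k:ℤ) - 3) :
    Achv k 2 1 T := by
  rcases lt_or_ge T 0 with h0 | h0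
  · -- T ≤ -1 : x=0, y=1, z=(1-T).toNat
    have h := achv_pair_single (k := k) (x := 0) (y := 1) (z := (1 - T).toNat)
      (by omega) (by omega) (by omega) (by omega) (by omega) (by omega)
    have e : ((0:ℕ) : ℤ) + ((1:ℕ):ℤ) - ((1 - T).toNat : ℤ) = T := by push_cast; omega
    rwa [e] at h
  rcases eq_or_lt_of_le h0 with h0' | h0'
  · -- T = 0
    have h := achv_pair_single (k := k) (x := 1) (y := 2) (z := 3)
      (by omega) (by omega) (by omega) (by omega) (by omega) (by omega)
    have e : ((1:ℕ) : ℤ) + ((2:ℕ):ℤ) - ((3:ℕ) : ℤ) = T := by push_cast; omega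
    rwa [e] at h
  rcases lt_or_ge T ((k:ℤ) - 1) with h1 | h1
  · -- 1 ≤ T ≤ k-2 : x=0, y=(T+1).toNat, z=1
    have h := achv_pair_single (k := k) (x := 0) (y := (T+1).toNat) (z := 1)
      (by omega) (by omega) (by omega) (by omega) (by omega) (by omega)
    have e : ((0:ℕ) : ℤ) + ((T+1).toNat : ℤ) - ((1:ℕ) : ℤ) = T := by push_cast; omega
    rwa [e] at h
  rcases eq_or_lt_of_le h1 with h1' | h1'
  · -- T = k-1 : x=1, y=k-2, z=0
    have h := achv_pair_single (k := k) (x := 1) (y := k-2) (z := 0)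
      (by omega) (by omega) (by omega) (by omega) (by omega) (by omega)
    have e : ((1:ℕ) : ℤ) + ((k-2:ℕ) : ℤ) - ((0:ℕ) : ℤ) = T := by push_cast; omega
    rwa [e] at h
  · -- T ≥ k : x=(T-(k-1)).toNat, y=k-1, z=0
    have h := achv_pair_single (k := k) (x := (T - ((k:ℤ)-1)).toNat) (y := k-1) (z := 0)
      (by omega) (by omega) (by omega) (by omega) (by omega) (by omega)
    have e : ((T - ((k:ℤ)-1)).toNat : ℤ) + ((k-1:ℕ) : ℤ) - ((0:ℕ) : ℤ) = T := by
      push_cast; omega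
    rwa [e] at h

lemma achE (k : ℕ) (T : ℤ) (hk : 1 ≤ k) (hL : LL k (k-1) 0 ≤ T) (hU : T ≤ UU k (k-1) 0) :
    Achv k (k-1) 0 T := by
  have hc2 := choose2 k
  have e1 := UU2 k (k-1) 0 (by omega)
  have e2 := LL2 k (k-1) 0 (by omega)
  have c1 : ((k - 1 : ℕ) : ℤ) = (k : ℤ) - 1 := by push_cast [hk]; ring
  rw [c1] at e1 e2
  norm_num at e1 e2
  have hTC : T ≤ ((k.choose 2 : ℕ) : ℤ) := by nlinarith
  have hg : ((k.choose 2 : ℕ) : ℤ) - T ≤ (k:ℤ) - 1 := by nlinarith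
  have hglt : (((k.choose 2 : ℕ) : ℤ) - T).toNat < k := by omega
  have h := achv_full (k := k) hglt
  have e : ((k.choose 2 : ℕ) : ℤ) - ((((k.choose 2 : ℕ) : ℤ) - T).toNat : ℤ) = T := by omega
  rwa [e] at h

lemma ach : ∀ k p m : ℕ, ∀ T : ℤ, p + m + 1 ≤ k → LL k p m ≤ T → T ≤ UU k p m →
    ¬(p = 1 ∧ m = 1 ∧ T = 0) → Achv k p m T := by
  intro k
  induction k using Nat.strong_induction_on with
  | _ k IH =>
  intro p m T hk hL hU hside
  have hpk : p ≤ k := by omega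
  have hmk : m ≤ k := by omega
  have eU := UU2 k p m hpk
  have eL := LL2 k p m hmk
  -- Case 1: p = 0, m = 0
  by_cases h00 : p = 0 ∧ m = 0
  · obtain ⟨rfl, rfl⟩ := h00
    norm_num at eU eL
    exact ⟨∅, ∅, by simp, by simp, by simp, by simp, by simp, by omega⟩
  -- Case 2: p = 1, m = 0
  by_cases h10 : p = 1 ∧ m = 0
  · obtain ⟨rfl, rfl⟩ := h10
    norm_num at eU eL
    have h := achv_single (k := k) (x := T.toNat) (by omega)
    have e : ((T.toNat : ℕ) : ℤ) = T := by omega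
    rwa [e] at h
  -- Case 3: p = 0, m = 1
  by_cases h01 : p = 0 ∧ m = 1
  · obtain ⟨rfl, rfl⟩ := h01
    norm_num at eU eL
    have h := achv_single (k := k) (x := (-T).toNat) (by omega)
    have e : (((-T).toNat : ℕ) : ℤ) = -T := by omega
    rw [e] at h
    have := h.swap
    rwa [neg_neg] at this
  -- Case 4: p = 1, m = 1
  by_cases h11 : p = 1 ∧ m = 1
  · obtain ⟨rfl, rfl⟩ := h11
    norm_num at eU eL
    have hT0 : T ≠ 0 := fun hc => hside ⟨rfl, rfl, hc⟩
    rcases lt_or_ge 0 T with ht | ht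
    · have h := achv_one_one (k := k) (x := T.toNat) (z := 0) (by omega) (by omega) (by omega)
      have e : ((T.toNat : ℕ) : ℤ) - ((0:ℕ) : ℤ) = T := by push_cast; omega
      rwa [e] at h
    · have h := achv_one_one (k := k) (x := 0) (z := (-T).toNat) (by omega) (by omega) (by omega)
      have e : ((0:ℕ) : ℤ) - (((-T).toNat : ℕ) : ℤ) = T := by push_cast; omega
      rwa [e] at h
  -- Case 5: p = 2, m = 1
  by_cases h21 : p = 2 ∧ m = 1
  · obtain ⟨rfl, rfl⟩ := h21
    norm_num at eU eL
    exact ach21 k T (by omega) (by omega) (by omega)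
  -- Case 6: p = 1, m = 2
  by_cases h12 : p = 1 ∧ m = 2
  · obtain ⟨rfl, rfl⟩ := h12
    norm_num at eU eL
    have h := ach21 k (-T) (by omega) (by omega) (by omega)
    have := h.swap
    rwa [neg_neg] at this
  -- Case 7: m = 0, p = k - 1
  by_cases hE : m = 0 ∧ p = k - 1
  · obtain ⟨rfl, rfl⟩ := hE
    exact achE k T (by omega) hL hU
  -- Case 8: p = 0, m = k - 1
  by_cases hF : p = 0 ∧ m = k - 1
  · obtain ⟨h8a, h8b⟩ := hF
    subst h8a h8b
    have hL' : LL k (k-1) 0 ≤ -T := by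
      unfold LL; linarith
    have hU' : -T ≤ UU k (k-1) 0 := by
      unfold LL at hL; linarith
    have h := (achE k (-T) (by omega) hL' hU').swap
    rwa [neg_neg] at h
  -- General case
  obtain ⟨K, rfl⟩ : ∃ K, k = K + 1 := ⟨k - 1, by omega⟩
  have hKk : K = (K + 1) - 1 := by omega
  by_cases hG1 : 1 ≤ p ∧ ((K:ℤ)) + LL K (p-1) m ≤ T
  · obtain ⟨hp1, hG1b⟩ := hG1
    have hup : T - (K:ℤ) ≤ UU K (p-1) m := by
      have := arith_up (K+1) p m T hp1 hk hU
      rw [← hKk] at this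
      push_cast at this
      linarith
    have hlow : LL K (p-1) m ≤ T - (K:ℤ) := by linarith
    have hside' : ¬(p - 1 = 1 ∧ m = 1 ∧ T - (K:ℤ) = 0) := by
      rintro ⟨ha, hb, -⟩
      exact h21 ⟨by omega, hb⟩
    have hsub := IH K (by omega) (p-1) m (T - K) (by omega) hlow hup hside'
    have h := hsub.addTopP
    have e1 : p - 1 + 1 = p := by omega
    have e2 : T - (K:ℤ) + K = T := by ring
    rwa [e1, e2] at h
  by_cases hG2 : 1 ≤ m ∧ T ≤ UU K p (m-1) - ((K:ℤ))
  · obtain ⟨hm1, hG2b⟩ := hG2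
    have hlow : LL K p (m-1) ≤ T + (K:ℤ) := by
      have := arith_up (K+1) m p (-T) hm1 (by omega) (by unfold LL at hL; linarith)
      rw [← hKk] at this
      push_cast at this
      unfold LL
      linarith
    have hside' : ¬(p = 1 ∧ m - 1 = 1 ∧ T + (K:ℤ) = 0) := by
      rintro ⟨ha, hb, -⟩
      exact h12 ⟨ha, by omega⟩
    have hsub := IH K (by omega) p (m-1) (T + K) (by omega) hlow (by linarith) hside'
    have h := hsub.addTopM
    have e1 : m - 1 + 1 = m := by omega
    have e2 : T + (K:ℤ) - K = T := by ring
    rwa [e1, e2] at h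
  -- G3: drop the top element
  push_neg at hG1 hG2
  have hbU : T ≤ UU K p m := by
    by_contra hc
    push_neg at hc
    rcases Nat.eq_zero_or_pos p with hp0 | hp1
    · subst hp0
      have := UU_p0 (K+1) m (by omega)
      rw [← hKk] at this
      omega
    · have h5 := arith_b1 (K+1) p m T hp1 hk (by rw [← hKk]; exact hc)
      rw [← hKk] at h5
      push_cast at h5
      have h6 := hG1 hp1
      linarith
  have hbL : LL K p m ≤ T := by
    by_contra hc
    push_neg at hc
    rcases Nat.eq_zero_or_pos m with hm0 | hm1
    · subst hm0
      have := LL_m0 (K+1) p (by omega) (by omega)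
      rw [← hKk] at this
      omega
    · have h' : UU K m p < -T := by unfold LL at hc; linarith
      have h5 := arith_b1 (K+1) m p (-T) hm1 (by omega) (by rw [← hKk]; exact h')
      rw [← hKk] at h5
      push_cast at h5
      unfold LL at h5
      have h6 := hG2 hm1
      linarith
  have hkk : p + m + 1 ≤ K := by
    by_contra hc
    push_neg at hc
    have heq : p + m = K := by omega
    have hp1 : 1 ≤ p := by
      rcases Nat.eq_zero_or_pos p with h0 | h1
      · exact absurd ⟨h0, by omega⟩ hF
      · exact h1
    have hm1 : 1 ≤ m := by
      rcases Nat.eq_zero_or_pos m with h0 | h1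
      · exact absurd ⟨h0, by omega⟩ hE
      · exact h1
    have h3 : 3 ≤ p + m := by
      rcases Nat.lt_or_ge (p + m) 3 with hlt | hge
      · exact absurd ⟨by omega, by omega⟩ h11
      · exact hge
    have hcov := arith_cov (K+1) p m T hp1 hm1 h3 (by omega)
      (by rw [← hKk]
          have h6 := hG1 hp1
          push_cast
          linarith)
    rw [← hKk] at hcov
    push_cast at hcov
    have h6 := hG2 hm1
    linarith
  have hside' : ¬(p = 1 ∧ m = 1 ∧ T = 0) := hside
  exact (IH K (by omega) p m T hkk hbL hbU hside').dropTop


lemma mem_sss (h k : ℕ) (a1 d : ℤ) (hd : d ≠ 0) (t : ℕ) (ht : t ≤ h) (T : ℤ)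
    (hach : Achv k (h - t) t T) :
    ((h : ℤ) - 2 * t) * a1 + d * T ∈
      signedSumset h ((range k).image (fun i : ℕ => a1 + (i : ℤ) * d)) := by
  obtain ⟨P, M, hP, hM, hdisj, hcP, hcM, hsum⟩ := hach
  set α : ℕ → ℤ := fun i : ℕ => a1 + (i : ℤ) * d with hα
  have hinj : Function.Injective α := by
    intro i j hij
    simp only [hα] at hij
    have h2 : (i : ℤ) * d = (j : ℤ) * d := by linarith
    have := mul_right_cancel₀ hd h2
    exact_mod_cast this
  have hPA : P.image α ⊆ (range k).image α := Finset.image_subset_image hP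
  have hMA : M.image α ⊆ (range k).image α := Finset.image_subset_image hM
  have hiffP : ∀ i, (α i ∈ P.image α ↔ i ∈ P) := fun i =>
    ⟨fun hc => by obtain ⟨j, hj, he⟩ := Finset.mem_image.1 hc; rwa [← hinj he],
     fun hi => Finset.mem_image_of_mem _ hi⟩
  have hiffM : ∀ i, (α i ∈ M.image α ↔ i ∈ M) := fun i =>
    ⟨fun hc => by obtain ⟨j, hj, he⟩ := Finset.mem_image.1 hc; rwa [← hinj he],
     fun hi => Finset.mem_image_of_mem _ hi⟩
  refine ⟨fun x => if x ∈ P.image α then 1 else if x ∈ M.image α then -1 else 0,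
    ?_, ?_, ?_, ?_⟩
  · intro x; dsimp only; split_ifs <;> simp
  · intro x hx
    dsimp only
    rw [if_neg (fun hc => hx (hPA hc)), if_neg (fun hc => hx (hMA hc))]
  · rw [Finset.sum_image (fun x _ y _ he => hinj he)]
    have key : ∀ i ∈ range k,
        |if α i ∈ P.image α then (1:ℤ) else if α i ∈ M.image α then -1 else 0|
          = (if i ∈ P then (1:ℤ) else 0) + (if i ∈ M then 1 else 0) := by
      intro i _
      simp only [hiffP i, hiffM i]
      by_cases hiP : i ∈ P
      · have hiM : i ∉ M := Finset.disjoint_left.1 hdisj hiP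
        simp [hiP, hiM]
      · by_cases hiM : i ∈ M <;> simp [hiP, hiM]
    rw [Finset.sum_congr rfl key, Finset.sum_add_distrib,
      Finset.sum_ite_mem, Finset.sum_ite_mem,
      Finset.inter_eq_right.2 hP, Finset.inter_eq_right.2 hM,
      Finset.sum_const, Finset.sum_const, hcP, hcM]
    simp only [nsmul_eq_mul, mul_one]
    push_cast
    omega
  · rw [Finset.sum_image (fun x _ y _ he => hinj he)]
    have key : ∀ i ∈ range k,
        (if α i ∈ P.image α then (1:ℤ) else if α i ∈ M.image α then -1 else 0) * α i
          = (if i ∈ P then α i else 0) + (if i ∈ M then -(α i) else 0) := by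
      intro i _
      simp only [hiffP i, hiffM i]
      by_cases hiP : i ∈ P
      · have hiM : i ∉ M := Finset.disjoint_left.1 hdisj hiP
        simp [hiP, hiM]
      · by_cases hiM : i ∈ M <;> simp [hiP, hiM]
    rw [Finset.sum_congr rfl key, Finset.sum_add_distrib,
      Finset.sum_ite_mem, Finset.sum_ite_mem,
      Finset.inter_eq_right.2 hP, Finset.inter_eq_right.2 hM]
    have eP : (∑ i ∈ P, α i) = (P.card : ℤ) * a1 + (∑ i ∈ P, (i:ℤ)) * d := by
      simp only [hα]
      rw [Finset.sum_add_distrib, Finset.sum_const, Finset.sum_mul, nsmul_eq_mul]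
    have eM : (∑ i ∈ M, -(α i)) = -((M.card : ℤ) * a1 + (∑ i ∈ M, (i:ℤ)) * d) := by
      rw [Finset.sum_neg_distrib]
      simp only [hα]
      rw [Finset.sum_add_distrib, Finset.sum_const, Finset.sum_mul, nsmul_eq_mul]
    rw [eP, eM, hcP, hcM]
    have hc : ((h - t : ℕ) : ℤ) = (h : ℤ) - t := by push_cast [ht]; ring
    rw [hc]
    linear_combination -d * hsum


lemma pieces (h k : ℕ) (a1 d : ℤ) (hh : 4 ≤ h) (hk1 : h + 1 ≤ k) (hd : 1 ≤ d)
    (W : ℕ → ℤ) (hW : ∀ t, t ≤ h → LL k (h-t) t ≤ W t)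
    (hsep : ∀ t t' : ℕ, t < t' → t' ≤ h → ∀ T T' : ℤ,
      W t ≤ T → T ≤ UU k (h-t) t → W t' ≤ T' → T' ≤ UU k (h-t') t' →
      ((h:ℤ) - 2*t) * a1 + d * T ≠ ((h:ℤ) - 2*t') * a1 + d * T') :
    ∃ S : Finset ℤ,
      ↑S ⊆ signedSumset h ((range k).image (fun i : ℕ => a1 + (i:ℤ)*d)) ∧
      S.card = ∑ t ∈ range (h+1), (UU k (h-t) t + 1 - W t).toNat := by
  have hdisj : ∀ t ∈ range (h+1), ∀ t' ∈ range (h+1), t ≠ t' →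
      Disjoint ((Finset.Icc (W t) (UU k (h-t) t)).image
          (fun T => ((h:ℤ) - 2*t) * a1 + d * T))
        ((Finset.Icc (W t') (UU k (h-t') t')).image
          (fun T => ((h:ℤ) - 2*t') * a1 + d * T)) := by
    intro t ht t' ht' hne
    rw [Finset.mem_range] at ht ht'
    rw [Finset.disjoint_left]
    rintro x hx hx'
    obtain ⟨T, hT, rfl⟩ := Finset.mem_image.1 hx
    obtain ⟨T', hT', he⟩ := Finset.mem_image.1 hx'
    rw [Finset.mem_Icc] at hT hT'
    rcases Nat.lt_or_ge t t' with hlt | hge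
    · exact hsep t t' hlt (by omega) T T' hT.1 hT.2 hT'.1 hT'.2 he.symm
    · have hlt : t' < t := by omega
      exact hsep t' t hlt (by omega) T' T hT'.1 hT'.2 hT.1 hT.2 he
  refine ⟨(range (h+1)).biUnion (fun t => (Finset.Icc (W t) (UU k (h-t) t)).image
      (fun T => ((h:ℤ) - 2*t) * a1 + d * T)), ?_, ?_⟩
  · intro x hx
    rw [Finset.mem_coe, Finset.mem_biUnion] at hx
    obtain ⟨t, ht, hx⟩ := hx
    rw [Finset.mem_range] at ht
    obtain ⟨T, hT, rfl⟩ := Finset.mem_image.1 hx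
    rw [Finset.mem_Icc] at hT
    have ht' : t ≤ h := by omega
    exact mem_sss h k a1 d (by omega) t ht' T
      (ach k (h-t) t T (by omega) (le_trans (hW t ht') hT.1) hT.2
        (by rintro ⟨h1, h2, -⟩; omega))
  · rw [Finset.card_biUnion hdisj]
    refine Finset.sum_congr rfl fun t _ => ?_
    rw [Finset.card_image_of_injective _ (fun T T' he => by
        have h2 : d * T = d * T' := by linarith
        exact mul_left_cancel₀ (by omega : d ≠ 0) h2),
      Int.card_Icc]

lemma UU_step (k h t : ℕ) (ht : t + 1 ≤ h) (hk : h + 1 ≤ k) :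
    UU k (h-t) t - UU k (h-(t+1)) (t+1) = (k:ℤ) - h + 2*t := by
  have e1 := UU2 k (h-t) t (by omega)
  have e2 := UU2 k (h-(t+1)) (t+1) (by omega)
  have c1 : ((h-t:ℕ):ℤ) = (h:ℤ)-t := by omega
  have c2 : ((h-(t+1):ℕ):ℤ) = (h:ℤ)-t-1 := by omega
  rw [c1] at e1; rw [c2] at e2; push_cast at e2
  nlinarith [e1, e2]

lemma MM_chain (h k : ℕ) (a1 d : ℤ) (hk1 : h + 1 ≤ k) (ha1 : 1 ≤ a1) (hd : 1 ≤ d) :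
    ∀ s s' : ℕ, s ≤ s' → s' ≤ h →
      ((h:ℤ) - 2*s')*a1 + d * UU k (h-s') s' ≤ ((h:ℤ) - 2*s)*a1 + d * UU k (h-s) s := by
  intro s s' hss hs'
  induction s', hss using Nat.le_induction with
  | base => exact le_refl _
  | succ n hn ih =>
    have hnh : n + 1 ≤ h := hs'
    have step := UU_step k h n (by omega) hk1
    have e : d * UU k (h-n) n = d * UU k (h-(n+1)) (n+1) + d*((k:ℤ)-h+2*n) := by
      linear_combination d * step
    have hdk : 0 ≤ d*((k:ℤ)-h+2*n) := mul_nonneg (by omega) (by push_cast; omega)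
    have h1 : ((h:ℤ) - 2*(n+1))*a1 + d * UU k (h-(n+1)) (n+1)
        ≤ ((h:ℤ) - 2*n)*a1 + d * UU k (h-n) n := by
      push_cast
      nlinarith [e, hdk]
    exact le_trans h1 (ih (by omega))

set_option maxHeartbeats 2000000 in
lemma regime1 (h k : ℕ) (a1 d : ℤ) (hh : 4 ≤ h) (hk1 : h + 1 ≤ k) (ha1 : 1 ≤ a1)
    (hd : 1 ≤ d) (hreg : d < 2*a1) :
    ∃ S : Finset ℤ, ↑S ⊆ signedSumset h ((range k).image (fun i : ℕ => a1 + (i:ℤ)*d)) ∧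
      2*h*k + 2 ≤ S.card + h^2 := by
  set e1 : ℤ := (2*a1 + d - 1) / d with he1
  have he1d : d * e1 ≤ 2*a1 + d - 1 := by
    rw [he1, mul_comm]; exact Int.ediv_mul_le _ (by omega)
  have he12 : 2 ≤ e1 := by
    rw [he1]; exact (Int.le_ediv_iff_mul_le (by omega)).2 (by omega)
  set W : ℕ → ℤ := fun t =>
    if t = h then LL k (h-t) t else max (LL k (h-t) t) (UU k (h-(t+1)) (t+1) - e1 + 1)
    with hWdef
  have hWle : ∀ t, t ≤ h → LL k (h-t) t ≤ W t := by
    intro t ht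
    by_cases h' : t = h
    · simp [hWdef, h']
    · simp only [hWdef, h', if_false]; exact le_max_left _ _
  have hd0 : (0:ℤ) ≤ d := by omega
  have hsep : ∀ t t' : ℕ, t < t' → t' ≤ h → ∀ T T' : ℤ,
      W t ≤ T → T ≤ UU k (h-t) t → W t' ≤ T' → T' ≤ UU k (h-t') t' →
      ((h:ℤ) - 2*t) * a1 + d * T ≠ ((h:ℤ) - 2*t') * a1 + d * T' := by
    intro t t' hlt hle T T' hWT hTU hWT' hT'U
    have ht1 : t + 1 ≤ h := by omega
    have hcut : UU k (h-(t+1)) (t+1) - e1 + 1 ≤ T := by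
      have := hWT
      simp only [hWdef, show t ≠ h by omega, if_false] at this
      exact le_trans (le_max_right _ _) this
    -- step 1 : M_{t+1} < x
    have step1 : ((h:ℤ) - 2*(t+1))*a1 + d * UU k (h-(t+1)) (t+1)
        < ((h:ℤ) - 2*t) * a1 + d * T := by
      nlinarith [mul_nonneg hd0 (show (0:ℤ) ≤ T - (UU k (h-(t+1)) (t+1) - e1 + 1) by linarith)]
    -- step 2 : M_{t'} ≤ M_{t+1}
    have step2 := MM_chain h k a1 d hk1 ha1 hd (t+1) t' hlt hle
    push_cast at step2
    -- step 3 : x' ≤ M_{t'}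
    have step3 : ((h:ℤ) - 2*t') * a1 + d * T' ≤ ((h:ℤ) - 2*t')*a1 + d * UU k (h-t') t' := by
      nlinarith [mul_le_mul_of_nonneg_left hT'U hd0]
    intro he
    linarith
  obtain ⟨S, hsub, hcard⟩ := pieces h k a1 d hh hk1 hd W hWle hsep
  refine ⟨S, hsub, ?_⟩
  -- termwise bound
  have hterm : ∀ t ∈ range (h+1),
      (if t = h then h*(k-h)+1 else (k-h)+2*t+2) ≤ (UU k (h-t) t + 1 - W t).toNat := by
    intro t htm
    rw [Finset.mem_range] at htm
    by_cases h' : t = h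
    · rw [h', if_pos rfl]
      simp only [hWdef, if_pos rfl, Nat.sub_self]
      have i1 := UU2 k 0 h (by omega)
      have i2 := LL2 k 0 h (by omega)
      norm_num at i1 i2
      have key : ((h*(k-h)+1 : ℕ) : ℤ) ≤ UU k 0 h + 1 - LL k 0 h := by
        push_cast [show h ≤ k by omega]
        nlinarith [i1, i2]
      omega
    · have ht : t ≤ h - 1 := by omega
      simp only [hWdef, h', if_false]
      have i1 := UU2 k (h-t) t (by omega)
      have i2 := LL2 k (h-t) t (by omega)
      have c1 : ((h-t:ℕ):ℤ) = (h:ℤ)-t := by omega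
      rw [c1] at i1 i2
      have step := UU_step k h t (by omega) hk1
      -- branch (a) : vs LL
      have ba : ((k-h:ℕ):ℤ) + 2*t + 2 ≤ UU k (h-t) t + 1 - LL k (h-t) t := by
        push_cast [show h ≤ k by omega]
        nlinarith [i1, i2,
          mul_nonneg (show (0:ℤ) ≤ (h:ℤ)-t-1 by omega)
            (show (0:ℤ) ≤ (k:ℤ)-((h:ℤ)-t)-1 by omega),
          mul_nonneg (show (0:ℤ) ≤ (t:ℤ) by omega)
            (show (0:ℤ) ≤ (k:ℤ)-t-2 by omega)]
      -- branch (b) : vs cut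
      have bb : ((k-h:ℕ):ℤ) + 2*t + 2 ≤ UU k (h-t) t + 1 - (UU k (h-(t+1)) (t+1) - e1 + 1) := by
        push_cast [show h ≤ k by omega]
        linarith [step]
      have : ((k-h:ℕ):ℤ) + 2*t + 2 ≤ UU k (h-t) t + 1 - W t := by
        simp only [hWdef, h', if_false]
        rcases max_cases (LL k (h-t) t) (UU k (h-(t+1)) (t+1) - e1 + 1) with ⟨hm, -⟩ | ⟨hm, -⟩ <;>
          rw [hm] <;> [linarith; linarith]
      omega
  have hsum := Finset.sum_le_sum hterm
  rw [← hcard] at hsum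
  -- evaluate the lower bound sum
  have heval : ∑ t ∈ range (h+1), (if t = h then h*(k-h)+1 else (k-h)+2*t+2)
      = (∑ t ∈ range h, ((k-h)+2*t+2)) + (h*(k-h)+1) := by
    rw [Finset.sum_range_succ]
    congr 1
    · exact Finset.sum_congr rfl fun t htm => by
        rw [Finset.mem_range] at htm; simp [show t ≠ h by omega]
    · simp
  have heval2 : ∑ t ∈ range h, ((k-h)+2*t+2)
      = h*((k-h)+2) + ((∑ t ∈ range h, t) + (∑ t ∈ range h, t)) := by
    calc ∑ t ∈ range h, ((k-h)+2*t+2)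
        = ∑ t ∈ range h, (((k-h)+2) + (t+t)) := Finset.sum_congr rfl (fun t _ => by ring)
      _ = ∑ t ∈ range h, ((k-h)+2) + ∑ t ∈ range h, (t+t) := Finset.sum_add_distrib
      _ = h*((k-h)+2) + ((∑ t ∈ range h, t) + (∑ t ∈ range h, t)) := by
          rw [Finset.sum_add_distrib, Finset.sum_const, Finset.sum_add_distrib]
          simp [mul_comm]
          ring
  have gauss := Finset.sum_range_id_mul_two h
  rw [heval, heval2] at hsum
  obtain ⟨u, rfl⟩ : ∃ u, k = h + u + 1 := ⟨k - h - 1, by omega⟩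
  have hu : h + u + 1 - h = u + 1 := by omega
  rw [hu] at hsum
  obtain ⟨v, rfl⟩ : ∃ v, h = v + 4 := ⟨h - 4, by omega⟩
  have g2 : (∑ t ∈ range (v+4), t) * 2 = (v+4)*(v+3) := by
    rw [gauss, show v+4-1 = v+3 from by omega]
  nlinarith [hsum, g2]

set_option maxHeartbeats 2000000 in
lemma regime2 (h k : ℕ) (a1 d : ℤ) (hh : 4 ≤ h) (hk1 : h + 1 ≤ k) (ha1 : 1 ≤ a1)
    (hd : 1 ≤ d) (hreg : 2*a1 < d) :
    ∃ S : Finset ℤ, ↑S ⊆ signedSumset h ((range k).image (fun i : ℕ => a1 + (i:ℤ)*d)) ∧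
      2*h*k + 2 ≤ S.card + h^2 := by
  have he_d : d * ((4*a1 + d - 1)/d) ≤ 4*a1 + d - 1 := by
    rw [mul_comm]; exact Int.ediv_mul_le _ (by omega)
  have he_1 : 1 ≤ (4*a1 + d - 1)/d := (Int.le_ediv_iff_mul_le (by omega)).2 (by omega)
  set e : ℤ := (4*a1 + d - 1) / d with he
  set W : ℕ → ℤ := fun t =>
    if h ≤ t + 1 then LL k (h-t) t else max (LL k (h-t) t) (UU k (h-(t+2)) (t+2) - e + 1)
    with hWdef
  have hWle : ∀ t, t ≤ h → LL k (h-t) t ≤ W t := by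
    intro t ht
    by_cases h' : h ≤ t + 1
    · simp [hWdef, h']
    · simp only [hWdef, h', if_false]; exact le_max_left _ _
  have hd0 : (0:ℤ) ≤ d := by omega
  have hsep : ∀ t t' : ℕ, t < t' → t' ≤ h → ∀ T T' : ℤ,
      W t ≤ T → T ≤ UU k (h-t) t → W t' ≤ T' → T' ≤ UU k (h-t') t' →
      ((h:ℤ) - 2*t) * a1 + d * T ≠ ((h:ℤ) - 2*t') * a1 + d * T' := by
    intro t t' hlt hle T T' hWT hTU hWT' hT'U
    rcases eq_or_lt_of_le (show t + 1 ≤ t' by omega) with hadj | hfar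
    · -- adjacent: residues mod d differ
      intro heq
      rw [← hadj] at heq
      push_cast at heq
      rcases le_or_gt T' T with hc | hc
      · nlinarith [mul_nonneg hd0 (show (0:ℤ) ≤ T - T' by linarith)]
      · nlinarith [mul_le_mul_of_nonneg_left (show (1:ℤ) ≤ T' - T by omega) hd0]
    · -- t' ≥ t + 2
      have ht2 : t + 2 ≤ h := by omega
      have hcut : UU k (h-(t+2)) (t+2) - e + 1 ≤ T := by
        have := hWT
        simp only [hWdef, show ¬ (h ≤ t + 1) by omega, if_false] at this
        exact le_trans (le_max_right _ _) this
      have step1 : ((h:ℤ) - 2*(t+2))*a1 + d * UU k (h-(t+2)) (t+2)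
          < ((h:ℤ) - 2*t) * a1 + d * T := by
        nlinarith [mul_nonneg hd0 (show (0:ℤ) ≤ T - (UU k (h-(t+2)) (t+2) - e + 1) by linarith)]
      have step2 := MM_chain h k a1 d hk1 ha1 hd (t+2) t' hfar hle
      push_cast at step2
      have step3 : ((h:ℤ) - 2*t') * a1 + d * T' ≤ ((h:ℤ) - 2*t')*a1 + d * UU k (h-t') t' := by
        nlinarith [mul_le_mul_of_nonneg_left hT'U hd0]
      intro heq
      linarith
  obtain ⟨S, hsub, hcard⟩ := pieces h k a1 d hh hk1 hd W hWle hsep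
  refine ⟨S, hsub, ?_⟩
  have hterm : ∀ t ∈ range (h+1),
      (if t = h then h*(k-h)+1 else if t+1 = h then (h-1)*(k-h+1)+k else 2*(k-h)+4*t+3)
        ≤ (UU k (h-t) t + 1 - W t).toNat := by
    intro t htm
    rw [Finset.mem_range] at htm
    by_cases h' : t = h
    · rw [h', if_pos rfl]
      simp only [hWdef, show h ≤ h + 1 by omega, if_pos, Nat.sub_self]
      have i1 := UU2 k 0 h (by omega)
      have i2 := LL2 k 0 h (by omega)
      norm_num at i1 i2
      have key : ((h*(k-h)+1 : ℕ) : ℤ) ≤ UU k 0 h + 1 - LL k 0 h := by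
        push_cast [show h ≤ k by omega]
        nlinarith [i1, i2]
      omega
    by_cases h'' : t + 1 = h
    · rw [if_neg h', if_pos h'']
      simp only [hWdef, show h ≤ t + 1 by omega, if_pos]
      have i1 := UU2 k (h-t) t (by omega)
      have i2 := LL2 k (h-t) t (by omega)
      have c1 : ((h-t:ℕ):ℤ) = (h:ℤ)-t := by omega
      rw [c1] at i1 i2
      have key : (((h-1)*(k-h+1)+k : ℕ) : ℤ) ≤ UU k (h-t) t + 1 - LL k (h-t) t := by
        push_cast [show h ≤ k by omega, show 1 ≤ h by omega]
        nlinarith [i1, i2, show ((h:ℤ) - t) = 1 by omega]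
      omega
    · have ht : t + 2 ≤ h := by omega
      rw [if_neg h', if_neg h'']
      have i1 := UU2 k (h-t) t (by omega)
      have i2 := LL2 k (h-t) t (by omega)
      have c1 : ((h-t:ℕ):ℤ) = (h:ℤ)-t := by omega
      rw [c1] at i1 i2
      have step_a := UU_step k h t (by omega) hk1
      have step_b := UU_step k h (t+1) (by omega) hk1
      have ba : ((2*(k-h)+4*t+3 : ℕ):ℤ) ≤ UU k (h-t) t + 1 - LL k (h-t) t := by
        push_cast [show h ≤ k by omega]
        nlinarith [i1, i2,
          mul_nonneg (show (0:ℤ) ≤ (h:ℤ)-t-2 by omega)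
            (show (0:ℤ) ≤ (k:ℤ)-((h:ℤ)-t)-1 by omega),
          mul_nonneg (show (0:ℤ) ≤ (t:ℤ) by omega)
            (show (0:ℤ) ≤ (k:ℤ)-t-3 by omega)]
      have bb : ((2*(k-h)+4*t+3 : ℕ):ℤ)
          ≤ UU k (h-t) t + 1 - (UU k (h-(t+2)) (t+2) - e + 1) := by
        push_cast [show h ≤ k by omega]
        have e2 : h - (t+1) - 1 = h - (t+2) := by omega
        push_cast at step_b
        linarith [step_a, step_b]
      have key : ((2*(k-h)+4*t+3 : ℕ):ℤ) ≤ UU k (h-t) t + 1 - W t := by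
        simp only [hWdef, show ¬ (h ≤ t+1) by omega, if_false]
        rcases max_cases (LL k (h-t) t) (UU k (h-(t+2)) (t+2) - e + 1) with ⟨hm, -⟩ | ⟨hm, -⟩ <;>
          rw [hm] <;> [linarith; linarith]
      omega
  have hsum := Finset.sum_le_sum hterm
  rw [← hcard] at hsum
  obtain ⟨v, rfl⟩ : ∃ v, h = v + 4 := ⟨h - 4, by omega⟩
  have heval : (∑ t ∈ range (v+4+1), (if t = v+4 then (v+4)*(k-(v+4))+1
        else if t+1 = v+4 then (v+4-1)*(k-(v+4)+1)+k else 2*(k-(v+4))+4*t+3))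
      = (∑ t ∈ range (v+3), (2*(k-(v+4))+4*t+3))
        + ((v+4-1)*(k-(v+4)+1)+k) + ((v+4)*(k-(v+4))+1) := by
    rw [Finset.sum_range_succ, show v+4 = (v+3)+1 from rfl, Finset.sum_range_succ]
    have : ∀ t ∈ range (v+3), (if t = (v+3)+1 then ((v+3)+1)*(k-((v+3)+1))+1
        else if t+1 = (v+3)+1 then ((v+3)+1-1)*(k-((v+3)+1)+1)+k else 2*(k-((v+3)+1))+4*t+3)
        = 2*(k-((v+3)+1))+4*t+3 := by
      intro t htm
      rw [Finset.mem_range] at htm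
      rw [if_neg (by omega), if_neg (by omega)]
    rw [Finset.sum_congr rfl this]
    simp
  rw [heval] at hsum
  have heval2 : ∑ t ∈ range (v+3), (2*(k-(v+4))+4*t+3)
      = (v+3)*(2*(k-(v+4))+3) + ((∑ t ∈ range (v+3), t) + (∑ t ∈ range (v+3), t)
        + (∑ t ∈ range (v+3), t) + (∑ t ∈ range (v+3), t)) := by
    calc ∑ t ∈ range (v+3), (2*(k-(v+4))+4*t+3)
        = ∑ t ∈ range (v+3), ((2*(k-(v+4))+3) + (t+t+t+t)) :=
          Finset.sum_congr rfl (fun t _ => by ring)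
      _ = ∑ t ∈ range (v+3), (2*(k-(v+4))+3) + ∑ t ∈ range (v+3), (t+t+t+t) :=
          Finset.sum_add_distrib
      _ = _ := by
          rw [Finset.sum_const, Finset.sum_add_distrib, Finset.sum_add_distrib,
            Finset.sum_add_distrib]
          simp [mul_comm]
  rw [heval2] at hsum
  have gauss := Finset.sum_range_id_mul_two (v+3)
  have g2 : (∑ t ∈ range (v+3), t) * 2 = (v+3)*(v+2) := by
    rw [gauss, show v+3-1 = v+2 from by omega]
  obtain ⟨u, rfl⟩ : ∃ u, k = v + 4 + u + 1 := ⟨k - (v+4) - 1, by omega⟩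
  have hu1 : v+4+u+1 - (v+4) = u + 1 := by omega
  rw [hu1] at hsum
  nlinarith [hsum, g2]

end S9

theorem stmt9 (h k : ℕ) (hh : 4 ≤ h) (hhk : h ≤ k - 1) (hk : 5 ≤ k)
    (a : ℕ → ℤ) (hpos : ∀ i ∈ Finset.Icc 1 k, 0 < a i)
    (hmono : ∀ i ∈ Finset.Icc 1 k, ∀ j ∈ Finset.Icc 1 k, i < j → a i < a j)
    (hap : ∃ d : ℤ, ∀ i ∈ Finset.Icc 2 k, a i = a (i - 1) + d)
    (hcard : (signedSumset h ((Finset.Icc 1 k).image a)).ncard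
      = 2 * h * k - h ^ 2 + 1) :
    (Finset.Icc 1 k).image a =
      (Finset.Icc 1 k).image (fun i : ℕ => a 1 * (2 * (i : ℤ) - 1)) := by
  obtain ⟨d, hda⟩ := hap
  have ha1 : 1 ≤ a 1 := hpos 1 (by simp [Finset.mem_Icc]; omega)
  have ha2 : a 2 = a 1 + d := by
    have := hda 2 (by simp [Finset.mem_Icc]; omega)
    simpa using this
  have hlt : a 1 < a 2 := hmono 1 (by simp [Finset.mem_Icc]; omega) 2
    (by simp [Finset.mem_Icc]; omega) (by omega)
  have hd1 : 1 ≤ d := by omega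
  have hAP : ∀ i, 1 ≤ i → i ≤ k → a i = a 1 + ((i - 1 : ℕ) : ℤ) * d := by
    intro i h1
    induction i, h1 using Nat.le_induction with
    | base => intro _; simp
    | succ n hn ih =>
      intro h2
      have h3 := hda (n+1) (by simp [Finset.mem_Icc]; omega)
      have h4 : n + 1 - 1 = n := by omega
      rw [h4] at h3
      rw [h3, ih (by omega)]
      have c1 : ((n - 1 : ℕ) : ℤ) = (n:ℤ) - 1 := by omega
      have c2 : ((n + 1 - 1 : ℕ) : ℤ) = (n:ℤ) := by omega
      rw [c1, c2]
      ring
  have himg : (Finset.Icc 1 k).image a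
      = (range k).image (fun i : ℕ => a 1 + (i:ℤ) * d) := by
    ext x
    simp only [Finset.mem_image, Finset.mem_Icc, Finset.mem_range]
    constructor
    · rintro ⟨i, ⟨hi1, hi2⟩, rfl⟩
      exact ⟨i - 1, by omega, (hAP i hi1 hi2).symm⟩
    · rintro ⟨j, hj, rfl⟩
      refine ⟨j + 1, ⟨by omega, by omega⟩, ?_⟩
      rw [hAP (j+1) (by omega) (by omega)]
      simp
  by_cases hd2 : d = 2 * a 1
  · apply Finset.image_congr
    intro i hi
    simp only [Finset.coe_Icc, Set.mem_Icc] at hi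
    rw [hAP i hi.1 hi.2, hd2]
    have c1 : ((i - 1 : ℕ) : ℤ) = (i:ℤ) - 1 := by omega
    rw [c1]; ring
  · exfalso
    have hk1 : h + 1 ≤ k := by omega
    have hhk' : h ≤ k := by omega
    have hsq : h^2 ≤ 2*h*k := by nlinarith [hhk']
    obtain ⟨S, hsub, hbound⟩ : ∃ S : Finset ℤ,
        ↑S ⊆ signedSumset h ((range k).image (fun i : ℕ => a 1 + (i:ℤ)*d)) ∧
        2*h*k + 2 ≤ S.card + h^2 := by
      rcases lt_or_gt_of_ne hd2 with hlt' | hgt'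
      · exact S9.regime1 h k (a 1) d hh hk1 ha1 hd1 hlt'
      · exact S9.regime2 h k (a 1) d hh hk1 ha1 hd1 hgt'
    rw [← himg] at hsub
    set P := 2*h*k with hP
    set Q := h^2 with hQ
    rcases Set.finite_or_infinite (signedSumset h ((Finset.Icc 1 k).image a)) with hf | hf
    · have hle : S.card ≤ (signedSumset h ((Finset.Icc 1 k).image a)).ncard := by
        rw [← Set.ncard_coe_finset]
        exact Set.ncard_le_ncard hsub hf
      omega
    · rw [hf.ncard] at hcard
      omega
end

section
/- Let h ≥ 3 and let A = {a₁ < a₂ < ⋯ < a_{h+1}} be a set of h+1 positive integers with a₃ − a₂ < 2a₁ and aᵢ − a_{i−1} > (a₂ − a₁)/2 for all i = 4, …, h+1. Then |h^∧_± A| ≥ (h+1)² + 1. -/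
open Finset

/-- Base table for the chain of 17 signed sums on `{a₁, a₂, a₃, a₄}`. -/
def btab : List (List ℤ) :=
  [[0,1,1,1],[1,0,1,1],[1,1,0,1],[-1,0,1,1],[-1,1,0,1],[0,1,-1,1],[1,0,-1,1],
   [0,1,1,-1],[1,0,1,-1],[1,1,0,-1],[-1,0,1,-1],[-1,1,0,-1],[0,1,-1,-1],[1,0,-1,-1],
   [-1,-1,0,-1],[-1,0,-1,-1],[0,-1,-1,-1]]

/-- Base chain coefficients. -/
def bc (p i : ℕ) : ℤ := if i = 0 then 0 else (btab.getD p []).getD (i-1) 0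

lemma bc_eq_zero (p i : ℕ) (hi : i ∉ Finset.Icc 1 4) : bc p i = 0 := by
  simp only [Finset.mem_Icc, not_and, not_le] at hi
  rcases Nat.eq_zero_or_pos i with h0 | h1
  · simp [bc, h0]
  · have h5 : 5 ≤ i := hi h1
    have hlen : (btab.getD p []).length ≤ 4 := by
      rcases lt_or_ge p btab.length with hp | hp
      · have hmem : btab.getD p [] ∈ btab := by
          rw [List.getD_eq_getElem _ _ hp]
          exact List.getElem_mem _
        have : ∀ l ∈ btab, l.length = 4 := by decide
        exact (this _ hmem).le
      · rw [List.getD_eq_default _ _ hp]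
        simp
    simp only [bc, if_neg (by omega : ¬ i = 0)]
    exact List.getD_eq_default _ _ (by omega)

theorem stmt13 (h : ℕ) (hh : 3 ≤ h)
    (a : ℕ → ℤ) (hpos : ∀ i ∈ Finset.Icc 1 (h + 1), 0 < a i)
    (hmono : ∀ i ∈ Finset.Icc 1 (h + 1), ∀ j ∈ Finset.Icc 1 (h + 1),
      i < j → a i < a j)
    (h32 : a 3 - a 2 < 2 * a 1)
    (hgap : ∀ i ∈ Finset.Icc 4 (h + 1), a 2 - a 1 < 2 * (a i - a (i - 1))) :
    (h + 1) ^ 2 + 1 ≤ (signedSumset h ((Finset.Icc 1 (h + 1)).image a)).ncard := by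
  have hm : ∀ i j : ℕ, 1 ≤ i → i < j → j ≤ h + 1 → a i < a j := by
    intro i j hi hij hj
    exact hmono i (by simp only [Finset.mem_Icc]; omega) j (by simp only [Finset.mem_Icc]; omega) hij
  have ha1 : 0 < a 1 := hpos 1 (by simp only [Finset.mem_Icc]; omega)
  have h12 : a 1 < a 2 := hm 1 2 (by omega) (by omega) (by omega)
  have h23 : a 2 < a 3 := hm 2 3 (by omega) (by omega) (by omega)
  have h34 : a 3 < a 4 := hm 3 4 (by omega) (by omega) (by omega)
  have hgap4 : a 2 - a 1 < 2 * (a 4 - a 3) := by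
    have := hgap 4 (by simp only [Finset.mem_Icc]; omega)
    simpa using this
  -- main inductive chain construction
  have main : ∀ k, 4 ≤ k → k ≤ h + 1 → ∃ c : ℕ → ℕ → ℤ,
      (∀ p, p ≤ k*k → ∀ i, c p i = -1 ∨ c p i = 0 ∨ c p i = 1) ∧
      (∀ p, p ≤ k*k → ∀ i, i ∉ Finset.Icc 1 k → c p i = 0) ∧
      (∀ p, p ≤ k*k → (∑ i ∈ Finset.Icc 1 k, |c p i|) = (k:ℤ) - 1) ∧
      (∀ p, p < k*k → (∑ i ∈ Finset.Icc 1 k, c (p+1) i * a i) < (∑ i ∈ Finset.Icc 1 k, c p i * a i)) ∧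
      ((∑ i ∈ Finset.Icc 1 k, c 0 i * a i) - (∑ i ∈ Finset.Icc 1 k, c 1 i * a i) ≤ a 2 - a 1) ∧
      ((∑ i ∈ Finset.Icc 1 k, c 0 i * a i) - (∑ i ∈ Finset.Icc 1 k, c (2*k) i * a i)
        ≤ 2 * a k + (a 2 - a 1)) := by
    intro k hk4
    induction k, hk4 using Nat.le_induction with
    | base =>
      intro _
      refine ⟨bc, ?_, ?_, ?_, ?_, ?_, ?_⟩
      · intro p hp i
        by_cases hi : i ∈ Finset.Icc 1 4
        · simp only [Finset.mem_Icc] at hi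
          obtain ⟨hi1, hi2⟩ := hi
          interval_cases p <;> interval_cases i <;> decide
        · right; left; exact bc_eq_zero p i hi
      · intro p _ i hi; exact bc_eq_zero p i hi
      · intro p hp
        interval_cases p <;> decide
      · have hsum : ∀ p, (∑ i ∈ Finset.Icc 1 4, bc p i * a i)
            = bc p 1 * a 1 + bc p 2 * a 2 + bc p 3 * a 3 + bc p 4 * a 4 := by
          intro p
          rw [show (Finset.Icc 1 4 : Finset ℕ) = {1,2,3,4} by decide]
          rw [Finset.sum_insert (by decide), Finset.sum_insert (by decide),
            Finset.sum_insert (by decide), Finset.sum_singleton]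
          ring
        intro p hp
        interval_cases p <;>
          simp only [hsum] <;> norm_num [bc, btab] <;> linarith
      · have hsum : ∀ p, (∑ i ∈ Finset.Icc 1 4, bc p i * a i)
            = bc p 1 * a 1 + bc p 2 * a 2 + bc p 3 * a 3 + bc p 4 * a 4 := by
          intro p
          rw [show (Finset.Icc 1 4 : Finset ℕ) = {1,2,3,4} by decide]
          rw [Finset.sum_insert (by decide), Finset.sum_insert (by decide),
            Finset.sum_insert (by decide), Finset.sum_singleton]
          ring
        simp only [hsum]; norm_num [bc, btab]
      · have hsum : ∀ p, (∑ i ∈ Finset.Icc 1 4, bc p i * a i)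
            = bc p 1 * a 1 + bc p 2 * a 2 + bc p 3 * a 3 + bc p 4 * a 4 := by
          intro p
          rw [show (Finset.Icc 1 4 : Finset ℕ) = {1,2,3,4} by decide]
          rw [Finset.sum_insert (by decide), Finset.sum_insert (by decide),
            Finset.sum_insert (by decide), Finset.sum_singleton]
          ring
        simp only [hsum]; norm_num [bc, btab]
        linarith
    | succ k hk ih =>
      intro hk1
      obtain ⟨c, hc1, hc2, hc3, hc4, hc5, hc6⟩ := ih (by omega)
      have hgapk : a 2 - a 1 < 2 * (a (k+1) - a k) := by
        have := hgap (k+1) (by simp only [Finset.mem_Icc]; omega)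
        simpa using this
      have hkk : (k+1)*(k+1) = k*k + 2*k + 1 := by ring
      set c' : ℕ → ℕ → ℤ := fun p i =>
        if p ≤ 2*k then (if i = k+1 then 1 else c p i)
        else (if i = k+1 then -1 else c (p - (2*k+1)) i) with hc'
      have hCp1 : ∀ p, p ≤ 2*k → c' p (k+1) = 1 := by
        intro p hp; simp only [hc']; simp [hp]
      have hCp : ∀ p, p ≤ 2*k → ∀ i, i ≠ k+1 → c' p i = c p i := by
        intro p hp i hi; simp only [hc']; rw [if_pos hp, if_neg hi]
      have hCm1 : ∀ p, ¬ p ≤ 2*k → c' p (k+1) = -1 := by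
        intro p hp; simp only [hc']; simp [hp]
      have hCm : ∀ p, ¬ p ≤ 2*k → ∀ i, i ≠ k+1 → c' p i = c (p - (2*k+1)) i := by
        intro p hp i hi; simp only [hc']; rw [if_neg hp, if_neg hi]
      have hsplit : (Finset.Icc 1 (k+1)) = insert (k+1) (Finset.Icc 1 k) :=
        (Finset.insert_Icc_right_eq_Icc_add_one (by omega)).symm
      have hnotmem : (k+1) ∉ Finset.Icc 1 k := by simp
      have h2kk : 2*k ≤ k*k := by nlinarith
      have hvp : ∀ p, p ≤ 2*k → (∑ i ∈ Finset.Icc 1 (k+1), c' p i * a i)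
          = (∑ i ∈ Finset.Icc 1 k, c p i * a i) + a (k+1) := by
        intro p hp
        rw [hsplit, Finset.sum_insert hnotmem, hCp1 p hp]
        have h2 : ∀ i ∈ Finset.Icc 1 k, c' p i * a i = c p i * a i := by
          intro i hi
          simp only [Finset.mem_Icc] at hi
          rw [hCp p hp i (by omega)]
        rw [Finset.sum_congr rfl h2]; ring
      have hvm : ∀ p, ¬ p ≤ 2*k → (∑ i ∈ Finset.Icc 1 (k+1), c' p i * a i)
          = (∑ i ∈ Finset.Icc 1 k, c (p - (2*k+1)) i * a i) - a (k+1) := by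
        intro p hp
        rw [hsplit, Finset.sum_insert hnotmem, hCm1 p hp]
        have h2 : ∀ i ∈ Finset.Icc 1 k, c' p i * a i = c (p - (2*k+1)) i * a i := by
          intro i hi
          simp only [Finset.mem_Icc] at hi
          rw [hCm p hp i (by omega)]
        rw [Finset.sum_congr rfl h2]; ring
      refine ⟨c', ?_, ?_, ?_, ?_, ?_, ?_⟩
      · intro p hp i
        by_cases hple : p ≤ 2*k
        · by_cases hik : i = k+1
          · right; right; rw [hik, hCp1 p hple]
          · rw [hCp p hple i hik]; exact hc1 p (by omega) i
        · by_cases hik : i = k+1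
          · left; rw [hik, hCm1 p hple]
          · rw [hCm p hple i hik]; exact hc1 (p - (2*k+1)) (by omega) i
      · intro p hp i hi
        have hik : i ≠ k+1 := by
          intro hik; exact hi (by simp only [hik, Finset.mem_Icc]; omega)
        have hi' : i ∉ Finset.Icc 1 k := by
          simp only [Finset.mem_Icc] at hi ⊢; omega
        by_cases hple : p ≤ 2*k
        · rw [hCp p hple i hik]; exact hc2 p (by omega) i hi'
        · rw [hCm p hple i hik]; exact hc2 (p - (2*k+1)) (by omega) i hi'
      · intro p hp
        rw [hsplit, Finset.sum_insert hnotmem]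
        by_cases hple : p ≤ 2*k
        · have h2 : ∀ i ∈ Finset.Icc 1 k, |c' p i| = |c p i| := by
            intro i hi
            simp only [Finset.mem_Icc] at hi
            rw [hCp p hple i (by omega)]
          rw [hCp1 p hple, Finset.sum_congr rfl h2, hc3 p (by omega), abs_one]
          push_cast; ring
        · have h2 : ∀ i ∈ Finset.Icc 1 k, |c' p i| = |c (p - (2*k+1)) i| := by
            intro i hi
            simp only [Finset.mem_Icc] at hi
            rw [hCm p hple i (by omega)]
          rw [hCm1 p hple, Finset.sum_congr rfl h2, hc3 (p - (2*k+1)) (by omega),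
            abs_neg, abs_one]
          push_cast; ring
      · intro p hp
        rcases (by omega : p + 1 ≤ 2*k ∨ p = 2*k ∨ 2*k < p) with hle | heq | hgt
        · rw [hvp p (by omega), hvp (p+1) hle]
          have := hc4 p (by omega)
          linarith
        · subst heq
          rw [hvp (2*k) (le_refl _), hvm (2*k+1) (by omega)]
          rw [show (2*k+1) - (2*k+1) = 0 by omega]
          have hak : a k < a (k+1) := hm k (k+1) (by omega) (by omega) (by omega)
          linarith
        · rw [hvm p (by omega), hvm (p+1) (by omega)]
          rw [show p + 1 - (2*k+1) = (p - (2*k+1)) + 1 by omega]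
          have := hc4 (p - (2*k+1)) (by omega)
          linarith
      · rw [hvp 0 (by omega), hvp 1 (by omega)]
        linarith
      · rw [hvp 0 (by omega), hvm (2*(k+1)) (by omega)]
        rw [show 2*(k+1) - (2*k+1) = 1 by omega]
        have hak : a k < a (k+1) := hm k (k+1) (by omega) (by omega) (by omega)
        linarith
  -- instantiate at k = h + 1
  obtain ⟨c, hc1, hc2, hc3, hc4, -, -⟩ := main (h+1) (by omega) (le_refl _)
  set n := h + 1 with hn
  set V : ℕ → ℤ := fun p => ∑ i ∈ Finset.Icc 1 n, c p i * a i with hV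
  have anti : ∀ q, q ≤ n*n → ∀ p, p < q → V q < V p := by
    intro q hq
    induction q with
    | zero => omega
    | succ m ihm =>
      intro p hp
      have h1 : V (m+1) < V m := hc4 m (by omega)
      rcases (by omega : p = m ∨ p < m) with rfl | hlt
      · exact h1
      · exact h1.trans (ihm (by omega) p hlt)
  have haInj : ∀ i ∈ Finset.Icc 1 n, ∀ j ∈ Finset.Icc 1 n, a i = a j → i = j := by
    intro i hi j hj hij
    simp only [Finset.mem_Icc] at hi hj
    by_contra hne
    rcases lt_or_gt_of_ne hne with hlt | hgt
    · exact absurd hij (ne_of_lt (hm i j (by omega) hlt (by omega)))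
    · exact absurd hij.symm (ne_of_lt (hm j i (by omega) hgt (by omega)))
  set A : Finset ℤ := (Finset.Icc 1 n).image a with hA
  have hmem : ∀ p, p ≤ n*n → V p ∈ signedSumset h A := by
    intro p hp
    set f : ℤ → ℤ := fun x => ∑ i ∈ (Finset.Icc 1 n).filter (fun i => a i = x), c p i with hf
    have hfa : ∀ j ∈ Finset.Icc 1 n, f (a j) = c p j := by
      intro j hj
      have : (Finset.Icc 1 n).filter (fun i => a i = a j) = {j} := by
        ext x
        simp only [Finset.mem_filter, Finset.mem_singleton]
        constructor
        · rintro ⟨hx, he⟩; exact haInj x hx j hj he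
        · rintro rfl; exact ⟨hj, rfl⟩
      simp [hf, this]
    have hfnot : ∀ x : ℤ, x ∉ A → f x = 0 := by
      intro x hx
      have : (Finset.Icc 1 n).filter (fun i => a i = x) = ∅ := by
        apply Finset.filter_eq_empty_iff.mpr
        intro i hi he
        exact hx (Finset.mem_image.mpr ⟨i, hi, he⟩)
      simp [hf, this]
    refine ⟨f, ?_, hfnot, ?_, ?_⟩
    · intro x
      by_cases hx : x ∈ A
      · obtain ⟨j, hj, rfl⟩ := Finset.mem_image.mp hx
        rw [hfa j hj]
        exact hc1 p hp j
      · right; left; exact hfnot x hx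
    · rw [hA, Finset.sum_image haInj]
      have : ∀ j ∈ Finset.Icc 1 n, |f (a j)| = |c p j| := by
        intro j hj; rw [hfa j hj]
      rw [Finset.sum_congr rfl this, hc3 p hp]
      push_cast [hn]; ring
    · rw [hA, Finset.sum_image haInj]
      have : ∀ j ∈ Finset.Icc 1 n, f (a j) * a j = c p j * a j := by
        intro j hj; rw [hfa j hj]
      rw [Finset.sum_congr rfl this]
  -- finiteness of the signed sumset
  have hfin : (signedSumset h A).Finite := by
    apply Set.Finite.subset (Set.finite_Icc (-(∑ x ∈ A, |x|)) (∑ x ∈ A, |x|))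
    rintro s ⟨f, hf1, -, -, rfl⟩
    have habs : |∑ x ∈ A, f x * x| ≤ ∑ x ∈ A, |x| := by
      calc |∑ x ∈ A, f x * x| ≤ ∑ x ∈ A, |f x * x| := Finset.abs_sum_le_sum_abs _ _
        _ ≤ ∑ x ∈ A, |x| := by
            apply Finset.sum_le_sum
            intro x hx
            rw [abs_mul]
            have : |f x| ≤ 1 := by rcases hf1 x with h | h | h <;> simp [h]
            nlinarith [abs_nonneg x, abs_nonneg (f x)]
    rw [Set.mem_Icc]
    exact abs_le.mp habs
  -- the image finset of the chain
  set T : Finset ℤ := (Finset.range (n*n+1)).image V with hT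
  have hTcard : T.card = n*n+1 := by
    rw [hT, Finset.card_image_of_injOn, Finset.card_range]
    intro p hp q hq hpq
    simp only [Finset.mem_coe, Finset.mem_range] at hp hq
    by_contra hne
    rcases lt_or_gt_of_ne hne with hlt | hgt
    · exact absurd hpq (ne_of_gt (anti q (by omega) p hlt))
    · exact absurd hpq (ne_of_lt (anti p (by omega) q hgt))
  have hTsub : (T : Set ℤ) ⊆ signedSumset h A := by
    intro x hx
    simp only [hT, Finset.coe_image, Set.mem_image, Finset.mem_coe, Finset.mem_range] at hx
    obtain ⟨p, hp, rfl⟩ := hx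
    exact hmem p (by omega)
  have := Set.ncard_le_ncard hTsub hfin
  rw [Set.ncard_coe_finset, hTcard] at this
  calc (h+1)^2 + 1 = n*n + 1 := by rw [hn]; ring
    _ ≤ _ := this
end
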